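/- arXiv:1412.4106 — 4 statements merged into one kernel-verified Lean document; each statement's English description precedes it below -/
import Mathlib

section
/- Let H : ℝ² → ℝ be the hairpin solution defined on Ω₁ = {z ∈ ℂ : |Re z| < π/2 + cosh(Im z)} by H(z) = Re(cosh(φ⁻¹(z))) where φ(ζ) = i(ζ + sinh ζ) maps the strip S = {|Im ζ| < π/2} conformally onto Ω₁. Then for ζ = y₁ + i y₂ ∈ S, the gradient satisfies |∇H|(φ(ζ)) = √(sinh² y₁ + sin² y₂) / (cosh y₁ + cos y₂). -/
open Complex ComplexConjugate

/-! Differentiating `V (φ ζ) = cosh ζ` gives `V'(φ ζ) · i(1 + cosh ζ) = sinh ζ`, and the gradient of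
`Re V` is `conj V'`, so `|∇H|(φ ζ) = |sinh ζ| / |1 + cosh ζ|`. Writing `ζ = x + iy`, one has
`|sinh ζ|² = sinh² x + sin² y` and `|1 + cosh ζ| = cosh x + cos y`, which is positive on the strip. -/

namespace Complex

lemma sinh_eq_re_add_im_mul_I (z : ℂ) :
    sinh z = (Real.sinh z.re * Real.cos z.im : ℝ) + (Real.cosh z.re * Real.sin z.im : ℝ) * I := by
  conv_lhs => rw [← re_add_im z]
  rw [sinh_add, sinh_mul_I, cosh_mul_I]
  push_cast
  ring

lemma one_add_cosh_eq_re_add_im_mul_I (z : ℂ) :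
    1 + cosh z =
      (1 + Real.cosh z.re * Real.cos z.im : ℝ) + (Real.sinh z.re * Real.sin z.im : ℝ) * I := by
  conv_lhs => rw [← re_add_im z]
  rw [cosh_add, cosh_mul_I, sinh_mul_I]
  push_cast
  ring

lemma norm_sinh (z : ℂ) : ‖sinh z‖ = √(Real.sinh z.re ^ 2 + Real.sin z.im ^ 2) := by
  rw [sinh_eq_re_add_im_mul_I, norm_def, normSq_add_mul_I]
  congr 1
  nlinarith [Real.sin_sq_add_cos_sq z.im, Real.cosh_sq z.re]

lemma norm_one_add_cosh (z : ℂ) : ‖1 + cosh z‖ = Real.cosh z.re + Real.cos z.im := by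
  rw [one_add_cosh_eq_re_add_im_mul_I, norm_def, normSq_add_mul_I]
  have hsq : (1 + Real.cosh z.re * Real.cos z.im) ^ 2 + (Real.sinh z.re * Real.sin z.im) ^ 2 =
      (Real.cosh z.re + Real.cos z.im) ^ 2 := by
    nlinarith [Real.sin_sq_add_cos_sq z.im, Real.cosh_sq z.re]
  rw [hsq, Real.sqrt_sq]
  linarith [Real.one_le_cosh z.re, Real.neg_one_le_cos z.im]

end Complex

lemma HasDerivAt.hasGradientAt_re {V : ℂ → ℂ} {c z : ℂ} (h : HasDerivAt V c z) :
    HasGradientAt (fun w => (V w).re) (conj c) z := by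
  rw [hasGradientAt_iff_hasFDerivAt]
  refine (reCLM.hasFDerivAt.comp z (h.hasFDerivAt.restrictScalars ℝ)).congr_fderiv ?_
  refine ContinuousLinearMap.ext fun v => ?_
  rw [InnerProductSpace.toDual_apply_apply, Complex.inner]
  simp [mul_comm]

/-- Gradient formula for the hairpin solution: if `φ(ζ) = i(ζ + sinh ζ)` maps
the strip `S = {|Im ζ| < π/2}` into `Ω₁ = {|Re z| < π/2 + cosh (Im z)}`, `V` is holomorphic
on `Ω₁` with `V ∘ φ = cosh` on `S`, and `H = Re V`, then for `ζ = y₁ + i y₂ ∈ S`,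
`|∇H|(φ(ζ)) = √(sinh² y₁ + sin² y₂) / (cosh y₁ + cos y₂)`. -/
theorem hairpin_gradient_formula
    (S : Set ℂ) (hS : S = {ζ : ℂ | |ζ.im| < Real.pi / 2})
    (Ω₁ : Set ℂ) (hΩ : Ω₁ = {z : ℂ | |z.re| < Real.pi / 2 + Real.cosh z.im})
    (φ : ℂ → ℂ) (hφ : ∀ ζ, φ ζ = I * (ζ + Complex.sinh ζ))
    (hmaps : Set.MapsTo φ S Ω₁)
    (V : ℂ → ℂ) (hV : DifferentiableOn ℂ V Ω₁)
    (hVφ : ∀ ζ ∈ S, V (φ ζ) = Complex.cosh ζ)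
    (H : ℂ → ℝ) (hH : ∀ z, H z = (V z).re) :
    ∀ ζ ∈ S,
      ‖gradient H (φ ζ)‖ =
        Real.sqrt (Real.sinh ζ.re ^ 2 + Real.sin ζ.im ^ 2) /
          (Real.cosh ζ.re + Real.cos ζ.im) := by
  intro ζ hζ
  obtain rfl : H = fun z => (V z).re := funext hH
  have hSopen : IsOpen S := hS ▸ isOpen_lt (by fun_prop) continuous_const
  have hΩopen : IsOpen Ω₁ := hΩ ▸ isOpen_lt (by fun_prop) (by fun_prop)
  obtain ⟨c, hc⟩ : ∃ c, HasDerivAt V c (φ ζ) :=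
    ⟨_, (hV.differentiableAt (hΩopen.mem_nhds (hmaps hζ))).hasDerivAt⟩
  have hφ' : HasDerivAt φ (I * (1 + cosh ζ)) ζ :=
    (((hasDerivAt_id ζ).add (hasDerivAt_sinh ζ)).const_mul I).congr_of_eventuallyEq
      (.of_forall hφ)
  have hchain : c * (I * (1 + cosh ζ)) = sinh ζ :=
    (hc.comp ζ hφ').unique <| (hasDerivAt_cosh ζ).congr_of_eventuallyEq <|
      Filter.eventually_of_mem (hSopen.mem_nhds hζ) hVφ
  have hcos : 0 < Real.cos ζ.im :=
    Real.cos_pos_of_mem_Ioo (abs_lt.mp (by rw [hS] at hζ; exact hζ))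
  have hden : 0 < ‖1 + cosh ζ‖ := norm_one_add_cosh ζ ▸ add_pos (Real.cosh_pos _) hcos
  rw [hc.hasGradientAt_re.gradient, RCLike.norm_conj, ← norm_sinh, ← norm_one_add_cosh, ← hchain,
    norm_mul, norm_mul, norm_I, one_mul, mul_div_cancel_right₀ _ hden.ne']
end

section
/- The function V(z) = cosh(φ⁻¹(z)), with φ(ζ) = i(ζ + sinh ζ), maps each of the half-domains Ω₁⁺ = Ω₁ ∩ {Im z > 0} and Ω₁⁻ = Ω₁ ∩ {Im z < 0} injectively into the slit right half-plane {ξ : Re ξ > 0} \ (0, 1]. -/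
open Complex Set
open scoped Real

/-!
Via `φ`, `V` is `cosh` on the half-strips `{|Im ζ| < π/2, ±Re ζ > 0}`, so everything is a property
of `cosh`. Writing `cosh a = cosh b` as `cos (a i) = cos (b i)` gives `b = a + 2kπi` or
`b = -a + 2kπi`: the second is excluded because `Re a`, `Re b` have the same sign, the first
forces `k = 0` since `|Im a - Im b| < π`. For the image, `cosh (x + iy) = cosh x cos y + i sinh x sin y`
has positive real part, and it is real only when `y = 0`, where it equals `cosh x > 1`.
-/

namespace Complex

theorem cosh_eq_re_add_im (z : ℂ) :
    cosh z = (Real.cosh z.re * Real.cos z.im : ℝ) + (Real.sinh z.re * Real.sin z.im : ℝ) * I := by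
  conv_lhs => rw [← re_add_im z]
  rw [cosh_add, cosh_mul_I, sinh_mul_I, ← ofReal_cosh, ← ofReal_sinh, ← ofReal_cos, ← ofReal_sin]
  push_cast
  ring

theorem cosh_re (z : ℂ) : (cosh z).re = Real.cosh z.re * Real.cos z.im := by
  rw [cosh_eq_re_add_im]; simp only [add_re, mul_re, ofReal_re, ofReal_im, I_re, I_im]; ring

theorem cosh_im (z : ℂ) : (cosh z).im = Real.sinh z.re * Real.sin z.im := by
  rw [cosh_eq_re_add_im]; simp only [add_im, mul_im, ofReal_re, ofReal_im, I_re, I_im]; ring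

theorem eq_of_cosh_eq_cosh {a b : ℂ} (hre : a.re + b.re ≠ 0) (him : |a.im - b.im| < 2 * π)
    (h : cosh a = cosh b) : a = b := by
  rw [← cos_mul_I, ← cos_mul_I, cos_eq_cos_iff] at h
  obtain ⟨k, hk | hk⟩ := h
  · have hre_eq : b.re = a.re := by simpa using congrArg im hk
    have hre_I : -b.im = 2 * k * π + -a.im := by simpa using congrArg re hk
    have him_eq : a.im - b.im = 2 * k * π := by linarith
    have hk0 : k = 0 := by
      have : |(k : ℝ)| < 1 := by
        rw [him_eq, abs_mul, abs_mul, abs_two, abs_of_pos Real.pi_pos] at him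
        nlinarith [Real.pi_pos]
      exact Int.abs_lt_one_iff.mp (by exact_mod_cast this)
    exact Complex.ext hre_eq.symm (by simpa [hk0, sub_eq_zero] using him_eq)
  · have : b.re = -a.re := by simpa using congrArg im hk
    exact absurd (by linarith) hre

theorem injOn_cosh_rightHalfStrip : InjOn cosh {ζ : ℂ | |ζ.im| < π / 2 ∧ 0 < ζ.re} :=
  fun a ha b hb ↦ eq_of_cosh_eq_cosh (by linarith [ha.2, hb.2])
    ((abs_sub a.im b.im).trans_lt (by linarith [ha.1, hb.1, Real.pi_pos]))

theorem injOn_cosh_leftHalfStrip : InjOn cosh {ζ : ℂ | |ζ.im| < π / 2 ∧ ζ.re < 0} :=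
  fun a ha b hb ↦ eq_of_cosh_eq_cosh (by linarith [ha.2, hb.2])
    ((abs_sub a.im b.im).trans_lt (by linarith [ha.1, hb.1, Real.pi_pos]))

theorem cosh_mem_slitRightHalfPlane {ζ : ℂ} (him : |ζ.im| < π / 2) (hre : ζ.re ≠ 0) :
    cosh ζ ∈ {ξ : ℂ | 0 < ξ.re} \ {ξ : ℂ | ξ.im = 0 ∧ ξ.re ∈ Ioc (0 : ℝ) 1} := by
  rw [abs_lt] at him
  have hcos : 0 < Real.cos ζ.im := Real.cos_pos_of_mem_Ioo ⟨him.1, him.2⟩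
  refine ⟨show 0 < (cosh ζ).re by rw [cosh_re]; positivity, fun ⟨him0, hle⟩ ↦ ?_⟩
  have hy : ζ.im = 0 := by
    rw [cosh_im, mul_eq_zero, Real.sinh_eq_zero, Real.sin_eq_zero_iff_of_lt_of_lt] at him0
    · exact him0.resolve_left hre
    · linarith [Real.pi_pos]
    · linarith [Real.pi_pos]
  rw [cosh_re, hy, Real.cos_zero, mul_one] at hle
  exact hle.2.not_gt (Real.one_lt_cosh.mpr hre)

end Complex

theorem hairpin_conformal_halves_general
    (S : Set ℂ) (hS : S = {ζ : ℂ | |ζ.im| < Real.pi / 2})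
    (φ : ℂ → ℂ)
    (Sp Sm Ωp Ωm : Set ℂ)
    (hSp : Sp = {ζ ∈ S | 0 < ζ.re}) (hSm : Sm = {ζ ∈ S | ζ.re < 0})
    (hbijp : Set.BijOn φ Sp Ωp) (hbijm : Set.BijOn φ Sm Ωm)
    (V : ℂ → ℂ)
    (hVφ : ∀ ζ ∈ S, V (φ ζ) = Complex.cosh ζ) :
    (Set.InjOn V Ωp ∧ Set.InjOn V Ωm) ∧
      Set.MapsTo V (Ωp ∪ Ωm)
        ({ξ : ℂ | 0 < ξ.re} \ {ξ : ℂ | ξ.im = 0 ∧ ξ.re ∈ Set.Ioc (0 : ℝ) 1}) := by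
  subst hS hSp hSm
  have hVφ' : ∀ s ⊆ {ζ : ℂ | |ζ.im| < π / 2}, EqOn cosh (V ∘ φ) s :=
    fun s hs ζ hζ ↦ (hVφ ζ (hs hζ)).symm
  refine ⟨⟨?_, ?_⟩, ?_⟩
  · rw [← hbijp.image_eq]
    exact (injOn_cosh_rightHalfStrip.congr (hVφ' _ fun _ h ↦ h.1)).image_of_comp
  · rw [← hbijm.image_eq]
    exact (injOn_cosh_leftHalfStrip.congr (hVφ' _ fun _ h ↦ h.1)).image_of_comp
  · rw [← hbijp.image_eq, ← hbijm.image_eq, ← image_union, mapsTo_image_iff]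
    rintro ζ (⟨him, hre⟩ | ⟨him, hre⟩) <;> rw [Function.comp_apply, hVφ ζ him]
    · exact cosh_mem_slitRightHalfPlane him hre.ne'
    · exact cosh_mem_slitRightHalfPlane him hre.ne

/-- The map `V(z) = cosh(φ⁻¹(z))`, where `φ(ζ) = i(ζ + sinh ζ)` maps the
right (resp. left) half-strip onto `Ω₁⁺ = Ω₁ ∩ {Im z > 0}` (resp. `Ω₁⁻ = Ω₁ ∩ {Im z < 0}`),
is injective on each of `Ω₁⁺`, `Ω₁⁻`, with image contained in the slit right half-plane
`{ξ : Re ξ > 0} \ (0, 1]`. -/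
theorem hairpin_conformal_halves
    (S : Set ℂ) (hS : S = {ζ : ℂ | |ζ.im| < Real.pi / 2})
    (Ω₁ : Set ℂ) (hΩ : Ω₁ = {z : ℂ | |z.re| < Real.pi / 2 + Real.cosh z.im})
    (φ : ℂ → ℂ) (hφ : ∀ ζ, φ ζ = I * (ζ + Complex.sinh ζ))
    (Sp Sm Ωp Ωm : Set ℂ)
    (hSp : Sp = {ζ ∈ S | 0 < ζ.re}) (hSm : Sm = {ζ ∈ S | ζ.re < 0})
    (hΩp : Ωp = {z ∈ Ω₁ | 0 < z.im}) (hΩm : Ωm = {z ∈ Ω₁ | z.im < 0})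
    (hbijp : Set.BijOn φ Sp Ωp) (hbijm : Set.BijOn φ Sm Ωm)
    (V : ℂ → ℂ)
    (hVφ : ∀ ζ ∈ S, V (φ ζ) = Complex.cosh ζ) :
    (Set.InjOn V Ωp ∧ Set.InjOn V Ωm) ∧
      Set.MapsTo V (Ωp ∪ Ωm)
        ({ξ : ℂ | 0 < ξ.re} \ {ξ : ℂ | ξ.im = 0 ∧ ξ.re ∈ Set.Ioc (0 : ℝ) 1}) :=
  hairpin_conformal_halves_general S hS φ Sp Sm Ωp Ωm hSp hSm hbijp hbijm V hVφ
end

section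
/- Universal Lipschitz bound: let u be a classical solution of the one-phase free boundary problem in B_R(0) ⊂ ℝ². If the largest disk contained in {u > 0} ∩ B_R centered at a point x touches the free boundary F(u), then |∇u(x)| ≤ C for a universal constant C. In particular, if 0 ∈ F(u), then ‖∇u‖_{L^∞(B_{R/2})} ≤ C. -/
/-!
On a disk `B_r(x)` inside the positive phase, a planar harmonic `u > 0` is the real part of a
holomorphic `F` with `Re F > 0`. The Schwarz lemma for the Cayley transform
`(F - F x) / (F + conj (F x))`, which maps `B_r(x)` into the unit disk, gives Harnack's inequality
`u x * (r - |y - x|) ≤ u y * (r + |y - x|)` and the gradient bound `|∇u(x)| ≤ 2 u(x) / r`.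
If the disk touches the free boundary at `p`, then `u p = 0` and `|∇u| < 2` near `p`, so
`u y ≤ 2 |y - p|` there; Harnack along the segment from `p` to `x` gives `u x ≤ 4 r`, hence
`|∇u(x)| ≤ 8`. When `0 ∈ F(u)` and `|x| < R/2`, the largest disk in `{u > 0}` centred at `x`
has radius at most `|x|`, so it touches `F(u)` inside `B_R`.
-/

open Filter Metric

noncomputable def lap (v : EuclideanSpace ℝ (Fin 2) → ℝ) (x : EuclideanSpace ℝ (Fin 2)) : ℝ :=
  ∑ i : Fin 2, fderiv ℝ (fun y => fderiv ℝ v y (EuclideanSpace.single i 1)) x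
    (EuclideanSpace.single i 1)

open Set Topology InnerProductSpace Laplacian ComplexConjugate
open scoped NNReal

namespace Complex

theorem norm_sub_lt_norm_add_conj {z a : ℂ} (hz : 0 < z.re) (ha : 0 < a.re) :
    ‖z - a‖ < ‖z + conj a‖ := by
  rw [← sq_lt_sq₀ (norm_nonneg _) (norm_nonneg _), Complex.sq_norm, Complex.sq_norm,
    normSq_apply, normSq_apply]
  simp only [sub_re, sub_im, add_re, add_im, conj_re, conj_im]
  nlinarith

private theorem mul_sub_le_mul_add_of_sq_le {X α t r d : ℝ} (hX : 0 < X) (hα : 0 < α)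
    (hd : 0 ≤ d) (hdr : d < r)
    (h : r ^ 2 * ((X - α) * (X - α) + t * t) ≤ d ^ 2 * ((X + α) * (X + α) + t * t)) :
    α * (r - d) ≤ X * (r + d) := by
  by_contra! hlt
  have h₁ : 0 < r * (α - X) - d * (X + α) := by linarith
  have h₂ : 0 < r * (α - X) + d * (X + α) := by nlinarith
  nlinarith [mul_pos h₁ h₂,
    mul_le_mul_of_nonneg_right (pow_le_pow_left₀ hd hdr.le 2) (mul_self_nonneg t)]

variable {F : ℂ → ℂ} {c : ℂ} {r : ℝ}

theorem mapsTo_cayley_ball (hre : ∀ z ∈ ball c r, 0 < (F z).re) (hc : c ∈ ball c r) :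
    MapsTo (fun z ↦ (F z - F c) / (F z + conj (F c))) (ball c r) (closedBall 0 1) := by
  intro z hz
  rw [mem_closedBall_zero_iff, norm_div]
  exact div_le_one_of_le₀ (norm_sub_lt_norm_add_conj (hre z hz) (hre c hc)).le (norm_nonneg _)

theorem add_conj_ne_zero_of_re_pos {z a : ℂ} (hz : 0 < z.re) (ha : 0 < a.re) :
    z + conj a ≠ 0 := fun h ↦ by
  simpa [h] using (norm_sub_lt_norm_add_conj hz ha).trans_le' (norm_nonneg _)

theorem harnack_of_re_pos (hF : DifferentiableOn ℂ F (ball c r))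
    (hre : ∀ z ∈ ball c r, 0 < (F z).re) {z : ℂ} (hz : z ∈ ball c r) :
    (F c).re * (r - dist z c) ≤ (F z).re * (r + dist z c) := by
  have hr : 0 < r := pos_of_mem_ball hz
  have hc : c ∈ ball c r := mem_ball_self hr
  have hden : ∀ w ∈ ball c r, F w + conj (F c) ≠ 0 := fun w hw ↦
    add_conj_ne_zero_of_re_pos (hre w hw) (hre c hc)
  have hschwarz := dist_le_div_mul_dist_of_mapsTo_ball
    (f := fun z ↦ (F z - F c) / (F z + conj (F c))) ((hF.sub_const _).div (hF.add_const _) hden)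
    (by simpa using mapsTo_cayley_ball hre hc) hz
  simp only [sub_self, zero_div, dist_zero_right, norm_div] at hschwarz
  rw [div_le_iff₀ (norm_pos_iff.2 (hden z hz))] at hschwarz
  have hle : r * ‖F z - F c‖ ≤ dist z c * ‖F z + conj (F c)‖ :=
    calc r * ‖F z - F c‖ ≤ r * (1 / r * dist z c * ‖F z + conj (F c)‖) := by gcongr
      _ = dist z c * ‖F z + conj (F c)‖ := by field_simp
  have hsq := pow_le_pow_left₀ (by positivity) hle 2
  rw [mul_pow, mul_pow, Complex.sq_norm, Complex.sq_norm, normSq_apply, normSq_apply] at hsq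
  simp only [sub_re, sub_im, add_re, add_im, conj_re, conj_im, ← sub_eq_add_neg] at hsq
  exact mul_sub_le_mul_add_of_sq_le (hre z hz) (hre c hc) dist_nonneg hz hsq

theorem norm_deriv_le_of_re_pos (hF : DifferentiableOn ℂ F (ball c r))
    (hre : ∀ z ∈ ball c r, 0 < (F z).re) (hr : 0 < r) :
    ‖deriv F c‖ ≤ 2 * (F c).re / r := by
  have hc : c ∈ ball c r := mem_ball_self hr
  have hden : ∀ w ∈ ball c r, F w + conj (F c) ≠ 0 := fun w hw ↦
    add_conj_ne_zero_of_re_pos (hre w hw) (hre c hc)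
  have hschwarz := norm_deriv_le_div_of_mapsTo_ball
    (f := fun z ↦ (F z - F c) / (F z + conj (F c))) ((hF.sub_const _).div (hF.add_const _) hden)
    (by simpa using mapsTo_cayley_ball hre hc) hr
  have hFc := (hF.differentiableAt (isOpen_ball.mem_nhds hc)).hasDerivAt
  have hα : 0 < 2 * (F c).re := by linarith [hre c hc]
  have hw : HasDerivAt (fun z ↦ (F z - F c) / (F z + conj (F c))) _ c :=
    (hFc.sub_const (F c)).div (hFc.add_const _) (hden c hc)
  rw [hw.deriv, sub_self, zero_mul,
    sub_zero, add_conj, sq, mul_div_mul_right _ _ (by exact_mod_cast hα.ne'), norm_div,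
    norm_real, Real.norm_of_nonneg hα.le, div_le_div_iff₀ hα hr] at hschwarz
  rw [le_div_iff₀ hr]
  linarith

theorem norm_fderiv_re_le_norm_deriv (hF : DifferentiableAt ℂ F c) :
    ‖fderiv ℝ (fun z ↦ (F z).re) c‖ ≤ ‖deriv F c‖ := by
  have hre : HasFDerivAt (fun z ↦ (F z).re) (reCLM.comp ((fderiv ℂ F c).restrictScalars ℝ)) c :=
    reCLM.hasFDerivAt.comp c (hF.hasFDerivAt.restrictScalars ℝ)
  rw [hre.fderiv, norm_deriv_eq_norm_fderiv]
  calc _ ≤ ‖reCLM‖ * ‖(fderiv ℂ F c).restrictScalars ℝ‖ := ContinuousLinearMap.opNorm_comp_le _ _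
    _ = ‖fderiv ℂ F c‖ := by rw [reCLM_norm, one_mul, ContinuousLinearMap.norm_restrictScalars]

end Complex

section Laplacian

variable {E G F : Type*} [NormedAddCommGroup E] [InnerProductSpace ℝ E] [FiniteDimensional ℝ E]
  [NormedAddCommGroup G] [InnerProductSpace ℝ G] [FiniteDimensional ℝ G]
  [NormedAddCommGroup F] [NormedSpace ℝ F]

theorem laplacian_comp_linearIsometryEquiv (g : G ≃ₗᵢ[ℝ] E) (f : E → F) :
    Δ (f ∘ g) = Δ f ∘ g := by
  ext x
  let v := stdOrthonormalBasis ℝ G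
  rw [laplacian_eq_iteratedFDeriv_orthonormalBasis _ v,
    laplacian_eq_iteratedFDeriv_orthonormalBasis _ (v.map g)]
  refine Finset.sum_congr rfl fun i _ ↦ ?_
  have h := congrArg (fun L ↦ L ![v i, v i]) <|
    g.toContinuousLinearEquiv.iteratedFDerivWithin_comp_right f uniqueDiffOn_univ (mem_univ (g x)) 2
  simp only [ContinuousLinearEquiv.coe_coe, LinearIsometryEquiv.coe_toContinuousLinearEquiv,
    preimage_univ, iteratedFDerivWithin_univ,
    ContinuousMultilinearMap.compContinuousLinearMap_apply] at h
  rw [h, OrthonormalBasis.map_apply]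
  congr 1
  ext j
  fin_cases j <;> rfl

theorem InnerProductSpace.HarmonicOnNhd.comp_linearIsometryEquiv {f : E → F} {s : Set E}
    (hf : HarmonicOnNhd f s) (g : G ≃ₗᵢ[ℝ] E) : HarmonicOnNhd (f ∘ g) (g ⁻¹' s) := fun z hz ↦
  ⟨(hf (g z) hz).1.comp z g.contDiff.contDiffAt, by
    rw [laplacian_comp_linearIsometryEquiv]
    exact (hf (g z) hz).2.comp_tendsto g.continuous.continuousAt⟩

end Laplacian

theorem lap_eq_laplacian {u : EuclideanSpace ℝ (Fin 2) → ℝ} {x : EuclideanSpace ℝ (Fin 2)}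
    (hu : ContDiffAt ℝ 2 u x) : lap u x = Δ u x := by
  have hd : DifferentiableAt ℝ (fderiv ℝ u) x :=
    (hu.fderiv_right (m := 1) (by norm_num)).differentiableAt (by norm_num)
  rw [laplacian_eq_iteratedFDeriv_orthonormalBasis u (EuclideanSpace.basisFun (Fin 2) ℝ), lap]
  refine Finset.sum_congr rfl fun i _ ↦ ?_
  rw [iteratedFDeriv_two_apply, fderiv_clm_apply hd (differentiableAt_const _)]
  simp

theorem harmonicOnNhd_of_lap_eq_zero {u : EuclideanSpace ℝ (Fin 2) → ℝ}
    {s : Set (EuclideanSpace ℝ (Fin 2))} (hs : IsOpen s) (hu : ContDiffOn ℝ 2 u s)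
    (hlap : ∀ x ∈ s, lap u x = 0) : HarmonicOnNhd u s := fun x hx ↦
  ⟨hu.contDiffAt (hs.mem_nhds hx), by
    filter_upwards [hs.mem_nhds hx] with y hy
    rw [← lap_eq_laplacian (hu.contDiffAt (hs.mem_nhds hy)), hlap y hy, Pi.zero_apply]⟩

theorem LipschitzOnWith.dist_le_mul_of_mem_closure {α β : Type*} [PseudoMetricSpace α]
    [PseudoMetricSpace β] {f : α → β} {K : ℝ≥0} {s : Set α} (hf : LipschitzOnWith K f s)
    {p y : α} (hp : p ∈ closure s) (hcont : ContinuousWithinAt f s p) (hy : y ∈ s) :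
    dist (f y) (f p) ≤ K * dist y p :=
  ContinuousWithinAt.closure_le hp (continuousWithinAt_const.dist hcont)
    (continuous_const.mul (continuous_const.dist continuous_id)).continuousWithinAt
    fun _ hz ↦ hf.dist_le_mul y hy _ hz

theorem eventually_dist_le_mul_dist_of_norm_fderiv_le {E : Type*} [NormedAddCommGroup E]
    [NormedSpace ℝ E] {u : E → ℝ} {s : Set E} {p : E} {L : ℝ≥0} (hs : Convex ℝ s)
    (hu : ∀ y ∈ s, DifferentiableAt ℝ u y) (hp : p ∈ closure s)
    (hcont : ContinuousWithinAt u s p) (hL : ∀ᶠ y in 𝓝[s] p, ‖fderiv ℝ u y‖ ≤ L) :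
    ∀ᶠ y in 𝓝[s] p, dist (u y) (u p) ≤ L * dist y p := by
  obtain ⟨δ, hδ, hsub⟩ := mem_nhdsWithin_iff.1 hL
  have hS : LipschitzOnWith L u (s ∩ ball p δ) :=
    hs.inter (convex_ball p δ) |>.lipschitzOnWith_of_nnnorm_fderiv_le (fun y hy ↦ hu y hy.1)
      fun y hy ↦ by exact_mod_cast hsub ⟨hy.2, hy.1⟩
  have hpS : p ∈ closure (s ∩ ball p δ) := isOpen_ball.closure_inter ⟨hp, mem_ball_self hδ⟩
  filter_upwards [inter_mem_nhdsWithin s (ball_mem_nhds p hδ)] with y hy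
  exact hS.dist_le_mul_of_mem_closure hpS (hcont.mono inter_subset_left) hy

section Planar

variable {E : Type*} [NormedAddCommGroup E] [InnerProductSpace ℝ E] [FiniteDimensional ℝ E]
  {u : E → ℝ} {x : E} {r : ℝ}

theorem InnerProductSpace.HarmonicOnNhd.exists_re_eq_of_finrank_eq_two
    (hE : Module.finrank ℝ E = 2) (hu : HarmonicOnNhd u (ball x r)) :
    ∃ (g : ℂ ≃ₗᵢ[ℝ] E) (F : ℂ → ℂ), DifferentiableOn ℂ F (ball (g.symm x) r) ∧
      ∀ z ∈ ball (g.symm x) r, (F z).re = u (g z) := by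
  let g := Complex.isometryOfOrthonormal ((stdOrthonormalBasis ℝ E).reindex (finCongr hE))
  have hU := hu.comp_linearIsometryEquiv g
  rw [g.preimage_ball] at hU
  obtain ⟨F, hFan, hFre⟩ := hU.exists_analyticOnNhd_ball_re_eq
  exact ⟨g, F, hFan.differentiableOn, hFre⟩

theorem InnerProductSpace.HarmonicOnNhd.harnack_ball (hE : Module.finrank ℝ E = 2)
    (hu : HarmonicOnNhd u (ball x r)) (hpos : ∀ y ∈ ball x r, 0 < u y) {y : E}
    (hy : y ∈ ball x r) : u x * (r - dist y x) ≤ u y * (r + dist y x) := by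
  obtain ⟨g, F, hF, hFu⟩ := hu.exists_re_eq_of_finrank_eq_two hE
  have hmaps : MapsTo g (ball (g.symm x) r) (ball x r) := fun z hz ↦ by
    rwa [← g.preimage_ball] at hz
  have hy' : g.symm y ∈ ball (g.symm x) r := by
    rwa [← g.preimage_ball, mem_preimage, g.apply_symm_apply]
  have hc : g.symm x ∈ ball (g.symm x) r := mem_ball_self (pos_of_mem_ball hy)
  have := Complex.harnack_of_re_pos hF (fun z hz ↦ hFu z hz ▸ hpos _ (hmaps hz)) hy'
  rwa [hFu _ hy', hFu _ hc, g.apply_symm_apply, g.apply_symm_apply, g.symm.dist_map] at this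

theorem InnerProductSpace.HarmonicOnNhd.norm_fderiv_le_of_pos (hE : Module.finrank ℝ E = 2)
    (hu : HarmonicOnNhd u (ball x r)) (hpos : ∀ y ∈ ball x r, 0 < u y) (hr : 0 < r) :
    ‖fderiv ℝ u x‖ ≤ 2 * u x / r := by
  obtain ⟨g, F, hF, hFu⟩ := hu.exists_re_eq_of_finrank_eq_two hE
  have hmaps : MapsTo g (ball (g.symm x) r) (ball x r) := fun z hz ↦ by
    rwa [← g.preimage_ball] at hz
  have hc : g.symm x ∈ ball (g.symm x) r := mem_ball_self hr
  have hloc : u =ᶠ[𝓝 x] (fun z ↦ (F z).re) ∘ g.symm := by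
    filter_upwards [isOpen_ball.mem_nhds (mem_ball_self hr)] with y hy
    rw [Function.comp_apply, hFu _ (by rwa [← g.preimage_ball, mem_preimage, g.apply_symm_apply]),
      g.apply_symm_apply]
  have hchain := g.symm.toContinuousLinearEquiv.comp_right_fderiv (f := fun z ↦ (F z).re) (x := x)
  rw [LinearIsometryEquiv.coe_toContinuousLinearEquiv] at hchain
  calc ‖fderiv ℝ u x‖ = ‖fderiv ℝ (fun z ↦ (F z).re) (g.symm x)‖ := by
        rw [hloc.fderiv_eq, hchain]
        exact ContinuousLinearMap.opNorm_comp_linearIsometryEquiv _ g.symm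
    _ ≤ ‖deriv F (g.symm x)‖ :=
        Complex.norm_fderiv_re_le_norm_deriv (hF.differentiableAt (isOpen_ball.mem_nhds hc))
    _ ≤ 2 * (F (g.symm x)).re / r :=
        Complex.norm_deriv_le_of_re_pos hF (fun z hz ↦ hFu z hz ▸ hpos _ (hmaps hz)) hr
    _ = 2 * u x / r := by rw [hFu _ hc, g.apply_symm_apply]

theorem InnerProductSpace.HarmonicOnNhd.le_of_eventually_le_mul_dist
    (hE : Module.finrank ℝ E = 2) (hu : HarmonicOnNhd u (ball x r))
    (hpos : ∀ y ∈ ball x r, 0 < u y) (hr : 0 < r) {p : E} (hp : dist p x = r) {L : ℝ}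
    (hgrowth : ∀ᶠ y in 𝓝[ball x r] p, u y ≤ L * dist y p) : u x ≤ 2 * L * r := by
  have hseg : ∀ τ ∈ Ioo (0 : ℝ) 1, AffineMap.lineMap p x τ ∈ ball x r := fun τ hτ ↦ by
    rw [mem_ball, dist_lineMap_right, hp, Real.norm_of_nonneg (by linarith [hτ.2])]
    nlinarith [hτ.1]
  have hlim : Tendsto (AffineMap.lineMap p x) (𝓝[>] (0 : ℝ)) (𝓝[ball x r] p) :=
    tendsto_nhdsWithin_iff.2 ⟨(AffineMap.lineMap_continuous.tendsto' 0 p (by simp)).mono_left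
      nhdsWithin_le_nhds, eventually_of_mem (Ioo_mem_nhdsGT one_pos) hseg⟩
  obtain ⟨τ, hτu, hτ⟩ := ((hlim.eventually hgrowth).and (Ioo_mem_nhdsGT one_pos)).exists
  have harnack := hu.harnack_ball hE hpos (hseg τ hτ)
  rw [dist_lineMap_left, hp, Real.norm_of_nonneg hτ.1.le] at hτu
  rw [dist_lineMap_right, hp, Real.norm_of_nonneg (by linarith [hτ.2])] at harnack
  have hτr : 0 < τ * r := mul_pos hτ.1 hr
  have hL : 0 < L := pos_of_mul_pos_left ((hpos _ (hseg τ hτ)).trans_le hτu) hτr.le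
  have : u x * (τ * r) ≤ L * (2 - τ) * r * (τ * r) := by
    nlinarith [mul_le_mul_of_nonneg_right hτu (by nlinarith [hτ.2] : 0 ≤ (2 - τ) * r)]
  nlinarith [le_of_mul_le_mul_right this hτr]

theorem InnerProductSpace.HarmonicOnNhd.norm_fderiv_le_of_touching
    (hE : Module.finrank ℝ E = 2) (hu : HarmonicOnNhd u (ball x r))
    (hpos : ∀ y ∈ ball x r, 0 < u y) (hr : 0 < r) {p : E} (hp : dist p x = r)
    (hcont : ContinuousAt u p) (hp₀ : u p = 0) {L : ℝ≥0}
    (hL : ∀ᶠ y in 𝓝[ball x r] p, ‖fderiv ℝ u y‖ ≤ L) : ‖fderiv ℝ u x‖ ≤ 4 * L := by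
  have hgrowth := eventually_dist_le_mul_dist_of_norm_fderiv_le (convex_ball x r)
    (fun y hy ↦ (hu y hy).1.differentiableAt two_ne_zero)
    (by rw [closure_ball x hr.ne', mem_closedBall, hp]) hcont.continuousWithinAt hL
  have hgrowth' : ∀ᶠ y in 𝓝[ball x r] p, u y ≤ L * dist y p := by
    filter_upwards [hgrowth] with y hy
    rw [hp₀, Real.dist_eq, sub_zero] at hy
    exact (le_abs_self _).trans hy
  calc ‖fderiv ℝ u x‖ ≤ 2 * u x / r := hu.norm_fderiv_le_of_pos hE hpos hr
    _ ≤ 2 * (2 * L * r) / r := by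
        gcongr
        exact hu.le_of_eventually_le_mul_dist hE hpos hr hp hgrowth'
    _ = 4 * L := by field_simp; ring

end Planar

theorem IsOpen.exists_ball_subset_dist_eq_mem_frontier {E : Type*} [NormedAddCommGroup E]
    [NormedSpace ℝ E] [ProperSpace E] {U : Set E} (hU : IsOpen U) {x q : E} (hx : x ∈ U)
    (hq : q ∉ U) : ∃ r > 0, ball x r ⊆ U ∧ r ≤ dist x q ∧ ∃ p ∈ frontier U, dist x p = r := by
  have hne : Uᶜ.Nonempty := ⟨q, hq⟩
  obtain ⟨p, hpU, hxp⟩ := hU.isClosed_compl.exists_infDist_eq_dist hne x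
  have hr : 0 < infDist x Uᶜ := (hU.isClosed_compl.notMem_iff_infDist_pos hne).1 (not_not.2 hx)
  have hball : ball x (infDist x Uᶜ) ⊆ U := fun y hy ↦ by
    by_contra hyU
    exact (infDist_le_dist_of_mem (x := x) hyU).not_gt (by rwa [dist_comm, ← mem_ball])
  refine ⟨_, hr, hball, infDist_le_dist_of_mem hq, p, ?_, hxp.symm⟩
  rw [hU.frontier_eq]
  refine ⟨closure_mono hball ?_, hpU⟩
  rw [closure_ball x hr.ne', mem_closedBall, dist_comm, hxp]

theorem norm_gradient_eq_norm_fderiv {E : Type*} [NormedAddCommGroup E] [InnerProductSpace ℝ E]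
    [CompleteSpace E] (f : E → ℝ) (x : E) : ‖gradient f x‖ = ‖fderiv ℝ f x‖ :=
  (toDual ℝ E).symm.norm_map _

/-- Universal Lipschitz bound: there is a universal constant `C > 0` such
that for any classical solution `u` of the one-phase free boundary problem in `B_R(0) ⊂ ℝ²`:
if the largest disk contained in the positive phase centered at `x` touches the free boundary
`F(u)`, then `|∇u(x)| ≤ C`; and if moreover `0 ∈ F(u)`, then `|∇u| ≤ C` throughout
`B_{R/2}` (on the positive phase). -/
theorem universal_lipschitz_bound :
    ∃ C > (0 : ℝ), ∀ (R : ℝ), 0 < R →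
      ∀ (u : EuclideanSpace ℝ (Fin 2) → ℝ)
        (pos F : Set (EuclideanSpace ℝ (Fin 2))),
        ContinuousOn u (ball (0 : EuclideanSpace ℝ (Fin 2)) R) →
        (∀ x, 0 ≤ u x) →
        pos = {x ∈ ball (0 : EuclideanSpace ℝ (Fin 2)) R | 0 < u x} →
        F = frontier pos ∩ ball (0 : EuclideanSpace ℝ (Fin 2)) R →
        ContDiffOn ℝ 2 u pos →
        (∀ x ∈ pos, lap u x = 0) →
        (∀ x₀ ∈ F, Tendsto (fun x => ‖gradient u x‖) (nhdsWithin x₀ pos) (nhds 1)) →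
        (∀ x ∈ pos, ∀ r : ℝ, 0 < r → ball x r ⊆ pos →
            (∃ p ∈ F, dist x p = r) → ‖gradient u x‖ ≤ C) ∧
        ((0 : EuclideanSpace ℝ (Fin 2)) ∈ F →
          ∀ x ∈ ball (0 : EuclideanSpace ℝ (Fin 2)) (R / 2), x ∈ pos →
            ‖gradient u x‖ ≤ C) := by
  refine ⟨8, by norm_num, fun R _ u pos F hcont hnonneg hpos hF hC2 hlap hgrad ↦ ?_⟩
  have hopen : IsOpen pos := hpos ▸ hcont.isOpen_inter_preimage isOpen_ball isOpen_Ioi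
  have hharm : HarmonicOnNhd u pos := harmonicOnNhd_of_lap_eq_zero hopen hC2 hlap
  have hfree : ∀ p ∈ F, p ∉ pos ∧ p ∈ ball 0 R ∧ u p = 0 := fun p hp ↦ by
    rw [hF, hopen.frontier_eq] at hp
    refine ⟨hp.1.2, hp.2, (hnonneg p).antisymm' (not_lt.1 fun h ↦ hp.1.2 ?_)⟩
    exact hpos ▸ ⟨hp.2, h⟩
  have touching : ∀ x ∈ pos, ∀ r : ℝ, 0 < r → ball x r ⊆ pos →
      (∃ p ∈ F, dist x p = r) → ‖gradient u x‖ ≤ 8 := by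
    rintro x - r hr hball ⟨p, hp, hxp⟩
    obtain ⟨-, hpR, hp₀⟩ := hfree p hp
    have hL : ∀ᶠ y in 𝓝[ball x r] p, ‖fderiv ℝ u y‖ ≤ (2 : ℝ≥0) := by
      filter_upwards [nhdsWithin_mono p hball ((hgrad p hp).eventually (gt_mem_nhds one_lt_two))]
        with y hy
      exact (norm_gradient_eq_norm_fderiv u y ▸ hy).le
    have := (hharm.mono hball).norm_fderiv_le_of_touching finrank_euclideanSpace_fin
      (fun y hy ↦ (hpos ▸ hball hy).2) hr (dist_comm x p ▸ hxp)
      (hcont.continuousAt (isOpen_ball.mem_nhds hpR)) hp₀ hL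
    rw [norm_gradient_eq_norm_fderiv]
    norm_num at this
    linarith
  refine ⟨touching, fun h0 x hx hxpos ↦ ?_⟩
  obtain ⟨r, hr, hball, hr0, p, hp, hxp⟩ :=
    hopen.exists_ball_subset_dist_eq_mem_frontier hxpos (hfree 0 h0).1
  refine touching x hxpos r hr hball ⟨p, hF ▸ ⟨hp, ?_⟩, hxp⟩
  rw [mem_ball] at hx ⊢
  calc dist p 0 ≤ dist p x + dist x 0 := dist_triangle p x 0
    _ < R := by rw [dist_comm, hxp]; linarith
end

section
/- Harmonic decay estimate in a strip: let f be harmonic on the strip Ŝ = {(t,θ) : |t| ≤ A, |θ| ≤ 3π/2} with |f| ≤ cδ on Ŝ, f(t, ±π/2) = 0 for |t| ≤ A, and |f(±Ã, θ)| ≤ C̃δ cos θ for |θ| ≤ π/2 where Ã = A − c₀/2. Then |∂_θ f(t, ±π/2)| ≤ (cδ/cosh Ã)·cosh t for all |t| ≤ Ã, where the constant c depends only on C̃. -/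
/-!
Both `f` and `-f` are dominated on the rectangle `[-A₀, A₀] × [-π/2, π/2]` by the harmonic
barrier `(C'δ / cosh A₀) cosh t cos θ`: the domination holds on the boundary by hypothesis and
propagates inside by the weak maximum principle. Since `f` and the barrier both vanish on
`θ = ±π/2`, the difference quotients of `f` in `θ` there are bounded by
`(C'δ / cosh A₀) cosh t · cos θ / |θ ∓ π/2| ≤ (C'δ / cosh A₀) cosh t`.
-/

/-- Laplacian on `ℝ × ℝ` via second partial derivatives. -/
noncomputable def lapP (f : ℝ × ℝ → ℝ) (p : ℝ × ℝ) : ℝ :=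
  fderiv ℝ (fun q => fderiv ℝ f q (1, 0)) p (1, 0) +
    fderiv ℝ (fun q => fderiv ℝ f q (0, 1)) p (0, 1)

open Set Filter Topology Real

theorem IsLocalMax.deriv_deriv_nonpos {f : ℝ → ℝ} {x₀ : ℝ} (h : IsLocalMax f x₀)
    (hc : ContinuousAt f x₀) : deriv (deriv f) x₀ ≤ 0 := by
  by_contra! hpos
  have hconst : f =ᶠ[𝓝 x₀] fun _ => f x₀ := by
    filter_upwards [isLocalMin_of_deriv_deriv_pos hpos h.deriv_eq_zero hc, h] with x hmin hmax
    exact le_antisymm hmax hmin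
  have : deriv f =ᶠ[𝓝 x₀] fun _ => 0 := by simpa using hconst.deriv
  simp [this.deriv_eq] at hpos

section

variable {E F : Type*} [NormedAddCommGroup E] [NormedSpace ℝ E] [NormedAddCommGroup F]
  [NormedSpace ℝ F]

theorem ContDiffAt.differentiableAt_fderiv_apply {f : E → F} {p : E}
    (hf : ContDiffAt ℝ 2 f p) (e : E) :
    DifferentiableAt ℝ (fun q => fderiv ℝ f q e) p :=
  ((hf.fderiv_right (m := 1) le_rfl).differentiableAt one_ne_zero).clm_apply
    (differentiableAt_const e)

theorem IsLocalMax.fderiv_fderiv_apply_nonpos {f : E → ℝ} {z : E}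
    (h : IsLocalMax f z) (hf : ContDiffAt ℝ 2 f z) (e : E) :
    fderiv ℝ (fun q => fderiv ℝ f q e) z e ≤ 0 := by
  set line : ℝ → E := fun s => z + s • e
  have hline : ∀ s, HasDerivAt line e s := fun s => by
    have := ((hasDerivAt_id s).smul_const e).const_add z
    rw [one_smul] at this
    exact this
  have hline0 : z = line 0 := by simp [line]
  have hcont : Tendsto line (𝓝 0) (𝓝 z) := hline0 ▸ (hline 0).continuousAt.tendsto
  have hderiv : deriv (f ∘ line) =ᶠ[𝓝 0] (fun q => fderiv ℝ f q e) ∘ line := by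
    filter_upwards [hcont.eventually (hf.eventually (by simp))] with s hs
    exact ((hs.differentiableAt two_ne_zero).hasFDerivAt.comp_hasDerivAt s (hline s)).deriv
  have hderiv2 := (hf.differentiableAt_fderiv_apply e).hasFDerivAt.comp_hasDerivAt_of_eq
    0 (hline 0) hline0
  rw [← hderiv2.deriv, ← hderiv.deriv_eq]
  exact (hline0 ▸ h).comp_continuous (hline 0).continuousAt |>.deriv_deriv_nonpos
    (hf.continuousAt.comp_of_eq (hline 0).continuousAt hline0.symm)

end

theorem IsLocalMax.lapP_nonpos {f : ℝ × ℝ → ℝ} {z : ℝ × ℝ} (h : IsLocalMax f z)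
    (hf : ContDiffAt ℝ 2 f z) : lapP f z ≤ 0 :=
  add_nonpos (h.fderiv_fderiv_apply_nonpos hf _) (h.fderiv_fderiv_apply_nonpos hf _)

theorem lapP_add {f g : ℝ × ℝ → ℝ} {p : ℝ × ℝ} (hf : ContDiffAt ℝ 2 f p)
    (hg : ContDiffAt ℝ 2 g p) : lapP (f + g) p = lapP f p + lapP g p := by
  have key : ∀ e : ℝ × ℝ, fderiv ℝ (fun q => fderiv ℝ (f + g) q e) p e =
      fderiv ℝ (fun q => fderiv ℝ f q e) p e + fderiv ℝ (fun q => fderiv ℝ g q e) p e := by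
    intro e
    have hsum : (fun q => fderiv ℝ (f + g) q e) =ᶠ[𝓝 p]
        (fun q => fderiv ℝ f q e) + fun q => fderiv ℝ g q e := by
      filter_upwards [hf.eventually (by simp), hg.eventually (by simp)] with q hfq hgq
      simp [fderiv_add (hfq.differentiableAt two_ne_zero) (hgq.differentiableAt two_ne_zero)]
    rw [hsum.fderiv_eq, fderiv_add (hf.differentiableAt_fderiv_apply e)
      (hg.differentiableAt_fderiv_apply e)]
    rfl
  simp only [lapP, key]
  ring

theorem lapP_neg (f : ℝ × ℝ → ℝ) (p : ℝ × ℝ) : lapP (-f) p = -lapP f p := by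
  simp only [lapP, fderiv_neg, neg_apply, fderiv_fun_neg]
  ring

theorem lapP_sub {f g : ℝ × ℝ → ℝ} {p : ℝ × ℝ} (hf : ContDiffAt ℝ 2 f p)
    (hg : ContDiffAt ℝ 2 g p) : lapP (f - g) p = lapP f p - lapP g p := by
  rw [sub_eq_add_neg, lapP_add (g := -g) hf hg.neg, lapP_neg, sub_eq_add_neg]

theorem lapP_const_smul (c : ℝ) (f : ℝ × ℝ → ℝ) (p : ℝ × ℝ) :
    lapP (c • f) p = c * lapP f p := by
  have hpartial : ∀ e : ℝ × ℝ,
      (fun q => fderiv ℝ (c • f) q e) = c • fun q => fderiv ℝ f q e := by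
    intro e; ext q; simp [fderiv_const_smul_field]
  rw [lapP, lapP, hpartial, hpartial, fderiv_const_smul_field, fderiv_const_smul_field]
  simp only [Pi.smul_apply, FunLike.coe_smul, smul_eq_mul]
  ring

theorem fderiv_comp_fst_mul_comp_snd_apply {a b : ℝ → ℝ} {a' b' : ℝ} {q : ℝ × ℝ}
    (ha : HasDerivAt a a' q.1) (hb : HasDerivAt b b' q.2) (v : ℝ × ℝ) :
    fderiv ℝ (fun p : ℝ × ℝ => a p.1 * b p.2) q v =
      a' * b q.2 * v.1 + a q.1 * b' * v.2 := by
  have h₁ : HasFDerivAt (fun p : ℝ × ℝ => a p.1) (a' • .fst ℝ ℝ ℝ) q :=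
    ha.comp_hasFDerivAt q hasFDerivAt_fst
  have h₂ : HasFDerivAt (fun p : ℝ × ℝ => b p.2) (b' • .snd ℝ ℝ ℝ) q :=
    hb.comp_hasFDerivAt q hasFDerivAt_snd
  rw [(h₁.fun_mul h₂).fderiv]
  simp
  ring

theorem lapP_comp_fst_mul_comp_snd {a a' a'' b b' b'' : ℝ → ℝ}
    (ha : ∀ x, HasDerivAt a (a' x) x) (ha' : ∀ x, HasDerivAt a' (a'' x) x)
    (hb : ∀ y, HasDerivAt b (b' y) y) (hb' : ∀ y, HasDerivAt b' (b'' y) y) (p : ℝ × ℝ) :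
    lapP (fun q => a q.1 * b q.2) p = a'' p.1 * b p.2 + a p.1 * b'' p.2 := by
  have h₁ : (fun q : ℝ × ℝ => fderiv ℝ (fun q => a q.1 * b q.2) q (1, 0)) =
      fun q => a' q.1 * b q.2 := by
    ext q; simp [fderiv_comp_fst_mul_comp_snd_apply (ha q.1) (hb q.2)]
  have h₂ : (fun q : ℝ × ℝ => fderiv ℝ (fun q => a q.1 * b q.2) q (0, 1)) =
      fun q => a q.1 * b' q.2 := by
    ext q; simp [fderiv_comp_fst_mul_comp_snd_apply (ha q.1) (hb q.2)]
  rw [lapP, h₁, h₂, fderiv_comp_fst_mul_comp_snd_apply (ha' p.1) (hb p.2),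
    fderiv_comp_fst_mul_comp_snd_apply (ha p.1) (hb' p.2)]
  simp

theorem lapP_cosh_mul_cos (p : ℝ × ℝ) :
    lapP (fun q => cosh q.1 * cos q.2) p = 0 := by
  rw [lapP_comp_fst_mul_comp_snd Real.hasDerivAt_cosh Real.hasDerivAt_sinh Real.hasDerivAt_cos
    (fun y => (Real.hasDerivAt_sin y).neg)]
  ring

theorem lapP_fst_sq (p : ℝ × ℝ) : lapP (fun q => q.1 ^ 2) p = 2 := by
  have := lapP_comp_fst_mul_comp_snd (a := fun x => x ^ 2) (b := fun _ => 1)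
    (fun x => by simpa using hasDerivAt_pow 2 x) (fun x => (hasDerivAt_id x).const_mul 2)
    (fun y => hasDerivAt_const y 1) (fun y => hasDerivAt_const y 0) p
  simpa using this

theorem exists_mem_frontier_le_of_lapP_pos {Ω : Set (ℝ × ℝ)} (hΩ : IsOpen Ω)
    (hb : Bornology.IsBounded Ω) {g : ℝ × ℝ → ℝ} (hcont : ContinuousOn g (closure Ω))
    (hg : ∀ p ∈ Ω, ContDiffAt ℝ 2 g p) (hlap : ∀ p ∈ Ω, 0 < lapP g p) {p : ℝ × ℝ}
    (hp : p ∈ closure Ω) : ∃ z ∈ frontier Ω, g p ≤ g z := by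
  obtain ⟨z, hz, hmax⟩ := hb.isCompact_closure.exists_isMaxOn ⟨p, hp⟩ hcont
  refine ⟨z, ?_, hmax hp⟩
  rw [frontier, hΩ.interior_eq]
  refine ⟨hz, fun hzΩ => ?_⟩
  have hloc : IsLocalMax g z := (hmax.on_subset subset_closure).isLocalMax (hΩ.mem_nhds hzΩ)
  exact (hloc.lapP_nonpos (hg z hzΩ)).not_gt (hlap z hzΩ)

theorem le_of_le_on_frontier_of_lapP_le {Ω : Set (ℝ × ℝ)} (hΩ : IsOpen Ω)
    (hb : Bornology.IsBounded Ω) {f u : ℝ × ℝ → ℝ} (hfc : ContinuousOn f (closure Ω))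
    (huc : ContinuousOn u (closure Ω)) (hf : ∀ p ∈ Ω, ContDiffAt ℝ 2 f p)
    (hu : ∀ p ∈ Ω, ContDiffAt ℝ 2 u p) (hlap : ∀ p ∈ Ω, lapP u p ≤ lapP f p)
    (hfr : ∀ z ∈ frontier Ω, f z ≤ u z) {p : ℝ × ℝ} (hp : p ∈ closure Ω) :
    f p ≤ u p := by
  obtain ⟨C, hC⟩ := isBounded_iff_forall_norm_le.1 hb.closure
  have hfst : ∀ q ∈ closure Ω, q.1 ^ 2 ≤ C ^ 2 := fun q hq =>
    sq_le_sq' (neg_le_of_abs_le ((norm_fst_le q).trans (hC q hq)))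
      ((le_abs_self _).trans ((norm_fst_le q).trans (hC q hq)))
  refine le_of_forall_pos_le_add fun ε hε => ?_
  -- perturbing by `η q.1²` makes the Laplacian strictly positive
  set η := ε / (C ^ 2 + 1)
  have hη : 0 < η := by positivity
  set g := f - u + η • fun q : ℝ × ℝ => q.1 ^ 2
  have hsq : ∀ q, ContDiffAt ℝ 2 (η • fun q : ℝ × ℝ => q.1 ^ 2) q := by fun_prop
  have hg : ∀ q ∈ Ω, ContDiffAt ℝ 2 g q := fun q hq => ((hf q hq).sub (hu q hq)).add (hsq q)
  have hlapg : ∀ q ∈ Ω, 0 < lapP g q := fun q hq => by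
    rw [lapP_add (f := f - u) ((hf q hq).sub (hu q hq)) (hsq q), lapP_sub (hf q hq) (hu q hq),
      lapP_const_smul, lapP_fst_sq]
    linarith [hlap q hq]
  have hgc : ContinuousOn g (closure Ω) := (hfc.sub huc).add (by fun_prop)
  obtain ⟨z, hz, hle⟩ := exists_mem_frontier_le_of_lapP_pos hΩ hb hgc hg hlapg hp
  have hgz : g z ≤ ε := by
    have hηC : η * C ^ 2 ≤ ε := by
      rw [div_mul_eq_mul_div, div_le_iff₀ (by positivity)]
      nlinarith
    have hz₁ := mul_le_mul_of_nonneg_left (hfst z (frontier_subset_closure hz)) hη.le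
    simp only [g, Pi.add_apply, Pi.sub_apply, Pi.smul_apply, smul_eq_mul]
    linarith [hfr z hz]
  have hgp : f p - u p ≤ g p := by
    simp only [g, Pi.add_apply, Pi.sub_apply, Pi.smul_apply, smul_eq_mul]
    nlinarith [sq_nonneg p.1]
  linarith

theorem abs_le_of_abs_le_on_frontier {Ω : Set (ℝ × ℝ)} (hΩ : IsOpen Ω)
    (hb : Bornology.IsBounded Ω) {f u : ℝ × ℝ → ℝ} (hfc : ContinuousOn f (closure Ω))
    (huc : ContinuousOn u (closure Ω)) (hf : ∀ p ∈ Ω, ContDiffAt ℝ 2 f p)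
    (hu : ∀ p ∈ Ω, ContDiffAt ℝ 2 u p) (hlapf : ∀ p ∈ Ω, lapP f p = 0)
    (hlapu : ∀ p ∈ Ω, lapP u p = 0) (hfr : ∀ z ∈ frontier Ω, |f z| ≤ u z)
    {p : ℝ × ℝ} (hp : p ∈ closure Ω) : |f p| ≤ u p := by
  have hupper : f p ≤ u p :=
    le_of_le_on_frontier_of_lapP_le hΩ hb hfc huc hf hu
      (fun q hq => by rw [hlapu q hq, hlapf q hq])
      (fun z hz => (le_abs_self _).trans (hfr z hz)) hp
  have hlower : -f p ≤ u p :=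
    le_of_le_on_frontier_of_lapP_le (f := -f) hΩ hb hfc.neg huc (fun q hq => (hf q hq).neg) hu
      (fun q hq => by rw [hlapu q hq, lapP_neg, hlapf q hq, neg_zero])
      (fun z hz => (neg_le_abs _).trans (hfr z hz)) hp
  exact abs_le.2 ⟨neg_le.1 hlower, hupper⟩

theorem abs_le_of_hasDerivAt_of_abs_le {φ : ℝ → ℝ} {d x M : ℝ} {l : Filter ℝ} [l.NeBot]
    (hl : l ≤ 𝓝[≠] x) (hφ : HasDerivAt φ d x) (hx : φ x = 0)
    (hbound : ∀ᶠ s in l, |φ s| ≤ M * |s - x|) : |d| ≤ M := by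
  refine le_of_tendsto ((hasDerivAt_iff_tendsto_slope.1 hφ).mono_left hl).abs ?_
  filter_upwards [hbound, hl self_mem_nhdsWithin] with s hs hne
  have hpos : 0 < |s - x| := abs_pos.2 (sub_ne_zero.2 hne)
  rw [slope_def_field, hx, sub_zero, abs_div, div_le_iff₀ hpos]
  exact hs

theorem DifferentiableAt.hasDerivAt_slice_snd {f : ℝ × ℝ → ℝ} {t θ : ℝ}
    (hf : DifferentiableAt ℝ f (t, θ)) :
    HasDerivAt (fun s => f (t, s)) (fderiv ℝ f (t, θ) (0, 1)) θ :=
  hf.hasFDerivAt.comp_hasDerivAt θ ((hasDerivAt_const θ t).prodMk (hasDerivAt_id θ))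

theorem Real.cos_le_abs_sub_pi_div_two (θ : ℝ) : cos θ ≤ |θ - π / 2| := by
  rw [← sin_pi_div_two_sub, abs_sub_comm]
  exact (le_abs_self _).trans abs_sin_le_abs

theorem Real.cos_le_abs_sub_neg_pi_div_two (θ : ℝ) : cos θ ≤ |θ - -(π / 2)| := by
  rw [← sin_add_pi_div_two, sub_neg_eq_add]
  exact (le_abs_self _).trans abs_sin_le_abs

theorem abs_fderiv_apply_le_of_abs_le_mul_cos {f : ℝ × ℝ → ℝ} {t M : ℝ}
    (hf_top : DifferentiableAt ℝ f (t, π / 2)) (hf_bot : DifferentiableAt ℝ f (t, -(π / 2)))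
    (h_top : f (t, π / 2) = 0) (h_bot : f (t, -(π / 2)) = 0)
    (hbound : ∀ θ, |θ| ≤ π / 2 → |f (t, θ)| ≤ M * cos θ) :
    |fderiv ℝ f (t, π / 2) (0, 1)| ≤ M ∧ |fderiv ℝ f (t, -(π / 2)) (0, 1)| ≤ M := by
  have hπ := pi_pos
  have hM : 0 ≤ M := by simpa using (abs_nonneg _).trans (hbound 0 (by simp; positivity))
  have hbound' : ∀ θ θ₀, |θ| ≤ π / 2 → cos θ ≤ |θ - θ₀| →
      |f (t, θ)| ≤ M * |θ - θ₀| := fun θ θ₀ hθ hcos =>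
    (hbound θ hθ).trans (mul_le_mul_of_nonneg_left hcos hM)
  constructor
  · refine abs_le_of_hasDerivAt_of_abs_le (nhdsLT_le_nhdsNE _) hf_top.hasDerivAt_slice_snd h_top ?_
    filter_upwards [Ioo_mem_nhdsLT (show -(π / 2) < π / 2 by linarith)] with θ hθ
    exact hbound' θ _ (abs_le.2 ⟨hθ.1.le, hθ.2.le⟩) (cos_le_abs_sub_pi_div_two θ)
  · refine abs_le_of_hasDerivAt_of_abs_le (nhdsGT_le_nhdsNE _) hf_bot.hasDerivAt_slice_snd h_bot ?_
    filter_upwards [Ioo_mem_nhdsGT (show -(π / 2) < π / 2 by linarith)] with θ hθ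
    exact hbound' θ _ (abs_le.2 ⟨hθ.1.le, hθ.2.le⟩) (cos_le_abs_sub_neg_pi_div_two θ)

theorem abs_le_mul_cosh_mul_cos_of_lapP_eq_zero {U : Set (ℝ × ℝ)} (hU : IsOpen U) {a M : ℝ}
    (ha : 0 < a) (hsub : Icc (-a) a ×ˢ Icc (-(π / 2)) (π / 2) ⊆ U)
    {f : ℝ × ℝ → ℝ} (hf : ContDiffOn ℝ 2 f U) (hlap : ∀ p ∈ U, lapP f p = 0)
    (hedge : ∀ t, |t| ≤ a → f (t, π / 2) = 0 ∧ f (t, -(π / 2)) = 0)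
    (hside : ∀ θ, |θ| ≤ π / 2 →
      |f (a, θ)| ≤ M * cos θ ∧ |f (-a, θ)| ≤ M * cos θ)
    {t θ : ℝ} (ht : |t| ≤ a) (hθ : |θ| ≤ π / 2) :
    |f (t, θ)| ≤ M / cosh a * cosh t * cos θ := by
  have hπ := pi_pos
  set Ω := Ioo (-a) a ×ˢ Ioo (-(π / 2)) (π / 2)
  have hΩ : IsOpen Ω := isOpen_Ioo.prod isOpen_Ioo
  have hΩb : Bornology.IsBounded Ω := Metric.isBounded_Ioo _ _ |>.prod (Metric.isBounded_Ioo _ _)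
  have hclosure : closure Ω = Icc (-a) a ×ˢ Icc (-(π / 2)) (π / 2) := by
    rw [closure_prod_eq, closure_Ioo (by linarith), closure_Ioo (by linarith)]
  have hΩU : ∀ p ∈ Ω, p ∈ U := fun p hp => hsub (hclosure ▸ subset_closure hp)
  set u := (M / cosh a) • fun q : ℝ × ℝ => cosh q.1 * cos q.2
  have hu : ContDiff ℝ 2 u := by fun_prop
  have hlapu : ∀ p, lapP u p = 0 := fun p => by
    rw [lapP_const_smul, lapP_cosh_mul_cos, mul_zero]
  have hfΩ : ∀ p ∈ Ω, ContDiffAt ℝ 2 f p := fun p hp =>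
    hf.contDiffAt (hU.mem_nhds (hΩU p hp))
  have hfc : ContinuousOn f (closure Ω) := hf.continuousOn.mono (hclosure ▸ hsub)
  have hfr : ∀ z ∈ frontier Ω, |f z| ≤ u z := by
    rw [frontier_prod_eq, frontier_Ioo (by linarith), frontier_Ioo (by linarith),
      closure_Ioo (by linarith), closure_Ioo (by linarith)]
    rintro ⟨s, φ⟩ (⟨hs, hφ⟩ | ⟨hs, hφ⟩)
    · have hs' : |s| ≤ a := abs_le.2 hs
      rcases hφ with rfl | rfl <;> simp [u, (hedge s hs').1, (hedge s hs').2]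
    · have hφ' : |φ| ≤ π / 2 := abs_le.2 hφ
      have hu_side : M / cosh a * (cosh a * cos φ) = M * cos φ := by
        field_simp [(cosh_pos a).ne']
      rcases hs with h | h <;> subst h
      · simpa [u, hu_side] using (hside φ hφ').2
      · simpa [u, hu_side] using (hside φ hφ').1
  have hmem : (t, θ) ∈ closure Ω := hclosure ▸ ⟨abs_le.1 ht, abs_le.1 hθ⟩
  simpa [u, mul_assoc] using abs_le_of_abs_le_on_frontier hΩ hΩb hfc hu.continuous.continuousOn
    hfΩ (fun p _ => hu.contDiffAt) (fun p hp => hlap p (hΩU p hp)) (fun p _ => hlapu p) hfr hmem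

/-- Harmonic decay estimate in a strip: if `f` is harmonic on
`Ŝ = {|t| < A, |θ| < 3π/2}` with `|f| ≤ C̃δ` there, `f(t, ±π/2) = 0` for `|t| ≤ A`, and
`|f(±A₀, θ)| ≤ C̃δ cos θ` for `|θ| ≤ π/2` (with `0 < A₀ < A`), then
`|∂_θ f(t, ±π/2)| ≤ (cδ/cosh A₀)·cosh t` for `|t| ≤ A₀`, where `c` depends only on `C̃`. -/
theorem harmonic_strip_decay (C' : ℝ) (hC' : 0 < C') :
    ∃ c > (0 : ℝ),
      ∀ (A A₀ δ : ℝ) (f : ℝ × ℝ → ℝ),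
        0 < A₀ → A₀ < A → 0 ≤ δ →
        ContDiffOn ℝ 2 f {p : ℝ × ℝ | |p.1| < A ∧ |p.2| < 3 * Real.pi / 2} →
        (∀ p ∈ {p : ℝ × ℝ | |p.1| < A ∧ |p.2| < 3 * Real.pi / 2}, lapP f p = 0) →
        (∀ p ∈ {p : ℝ × ℝ | |p.1| < A ∧ |p.2| < 3 * Real.pi / 2}, |f p| ≤ C' * δ) →
        (∀ t : ℝ, |t| ≤ A → f (t, Real.pi / 2) = 0 ∧ f (t, -(Real.pi / 2)) = 0) →
        (∀ θ : ℝ, |θ| ≤ Real.pi / 2 →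
          |f (A₀, θ)| ≤ C' * δ * Real.cos θ ∧ |f (-A₀, θ)| ≤ C' * δ * Real.cos θ) →
        ∀ t : ℝ, |t| ≤ A₀ →
          |fderiv ℝ f (t, Real.pi / 2) (0, 1)| ≤ c * δ / Real.cosh A₀ * Real.cosh t ∧
          |fderiv ℝ f (t, -(Real.pi / 2)) (0, 1)| ≤ c * δ / Real.cosh A₀ * Real.cosh t := by
  refine ⟨C', hC', fun A A₀ δ f hA₀ hA₀A _ hf hlap _ hedge hside t ht => ?_⟩
  have hπ := pi_pos
  set U := {p : ℝ × ℝ | |p.1| < A ∧ |p.2| < 3 * π / 2}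
  have hU : IsOpen U :=
    (isOpen_lt continuous_fst.abs continuous_const).and
      (isOpen_lt continuous_snd.abs continuous_const)
  have hsub : Icc (-A₀) A₀ ×ˢ Icc (-(π / 2)) (π / 2) ⊆ U := fun p ⟨h₁, h₂⟩ =>
    ⟨(abs_le.2 h₁).trans_lt hA₀A, (abs_le.2 h₂).trans_lt (by linarith)⟩
  have hedge₀ : ∀ s, |s| ≤ A₀ → f (s, π / 2) = 0 ∧ f (s, -(π / 2)) = 0 :=
    fun s hs => hedge s (hs.trans hA₀A.le)
  have hdiff : ∀ θ, |θ| ≤ π / 2 → DifferentiableAt ℝ f (t, θ) := fun θ hθ =>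
    (hf.differentiableOn two_ne_zero).differentiableAt
      (hU.mem_nhds (hsub ⟨abs_le.1 ht, abs_le.1 hθ⟩))
  have hπ2 : |π / 2| ≤ π / 2 := (abs_of_pos (by positivity)).le
  exact abs_fderiv_apply_le_of_abs_le_mul_cos (hdiff _ hπ2) (hdiff _ (by rwa [abs_neg]))
    (hedge₀ t ht).1 (hedge₀ t ht).2
    fun θ => abs_le_mul_cosh_mul_cos_of_lapP_eq_zero hU hA₀ hsub hf hlap hedge₀ hside ht
end
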